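/- Let ε ≥ 0 be a real number and let c : ℝ → ℝ be an ε-drift-bounded clock. Let (s, m, r) be a valid synchronization record, i.e. real numbers with s ≤ m ≤ r. Then for every real time t with t ≥ r, the interval computed by the TIME function contains the true current time: m + (c t − c r)·(1 − ε) ≤ t ≤ m + (c t − c s)·(1 + ε). (Correctness of the time interval computed from any past synchronization in the current configuration.) -/

import Mathlib

/-! Lower end: the clock is monotone and `(1 - ε)(1 + ε) ≤ 1`, so `(c t - c r)(1 - ε)` is at most
`(c t - c r) / (1 + ε)`, which the drift bound keeps below `t - r`; add `m ≤ r`. Upper end: the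
other drift bound gives `t - s ≤ (c t - c s)(1 + ε)`; add `s ≤ m`. -/

/-- An ε-drift-bounded clock: a map from real (clock-master) time to local clock
readings whose rate relative to real time is within a factor `1 + ε`. -/
def DriftBoundedClock (ε : ℝ) (c : ℝ → ℝ) : Prop :=
  ∀ s t : ℝ, s ≤ t → (t - s) / (1 + ε) ≤ c t - c s ∧ c t - c s ≤ (1 + ε) * (t - s)

theorem mul_one_sub_le_div_one_add {x ε : ℝ} (hx : 0 ≤ x) (hε : 0 < 1 + ε) :
    x * (1 - ε) ≤ x / (1 + ε) := by
  rw [le_div_iff₀ hε, mul_assoc]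
  exact mul_le_of_le_one_right hx (by nlinarith [sq_nonneg ε])

namespace DriftBoundedClock

variable {ε : ℝ} {c : ℝ → ℝ} {s t : ℝ}

theorem sub_le_sub_mul (hc : DriftBoundedClock ε c) (hε : 0 < 1 + ε) (hst : s ≤ t) :
    t - s ≤ (c t - c s) * (1 + ε) :=
  (div_le_iff₀ hε).mp (hc s t hst).1

theorem sub_div_le_sub (hc : DriftBoundedClock ε c) (hε : 0 < 1 + ε) (hst : s ≤ t) :
    (c t - c s) / (1 + ε) ≤ t - s :=
  (div_le_iff₀' hε).mpr (hc s t hst).2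

theorem monotone (hc : DriftBoundedClock ε c) (hε : 0 < 1 + ε) : Monotone c := fun s t hst =>
  sub_nonneg.mp <| (div_nonneg (sub_nonneg.mpr hst) hε.le).trans (hc s t hst).1

theorem sub_mul_one_sub_le (hc : DriftBoundedClock ε c) (hε : 0 < 1 + ε) (hst : s ≤ t) :
    (c t - c s) * (1 - ε) ≤ t - s :=
  (mul_one_sub_le_div_one_add (sub_nonneg.mpr (hc.monotone hε hst)) hε).trans
    (hc.sub_div_le_sub hε hst)

end DriftBoundedClock

/-- Correctness of the time interval computed by TIME from any past synchronization. -/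
theorem time_interval_correct (ε : ℝ) (hε : 0 ≤ ε) (c : ℝ → ℝ)
    (hc : DriftBoundedClock ε c)
    (s m r : ℝ) (hsm : s ≤ m) (hmr : m ≤ r)
    (t : ℝ) (ht : r ≤ t) :
    m + (c t - c r) * (1 - ε) ≤ t ∧ t ≤ m + (c t - c s) * (1 + ε) := by
  have hε' : 0 < 1 + ε := by linarith
  constructor
  · calc m + (c t - c r) * (1 - ε) ≤ r + (t - r) :=
          add_le_add hmr (hc.sub_mul_one_sub_le hε' ht)
      _ = t := by ring
  · calc t = s + (t - s) := by ring
      _ ≤ m + (c t - c s) * (1 + ε) :=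
          add_le_add hsm (hc.sub_le_sub_mul hε' ((hsm.trans hmr).trans ht))
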